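/- The implicit function Λ is twice differentiable with Λ''(a) > 0 on (1-α, 1); consequently, the extension of Λ to [0,1] defined by Λ(a) = 0 for a ∈ [0, 1-α] and Λ(1) = 1 is a convex function from [0,1] to [0,1] with Λ(0) = 0 and Λ(1) = 1, which is strictly convex on [1-α, 1]. -/

import Mathlib

/-! `F(·, a)` is the relative entropy of Bernoulli laws; on `[0, a]` it is strictly decreasing,
with `∂F/∂λ = logit λ - logit a`, so the implicit function theorem makes `Λ` differentiable with
`Λ' = d / (p t)`, where `p = a(1-a)`, `q = Λ(1-Λ)`, `d = a - Λ`, `t = logit a - logit Λ > 0`.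
Differentiating again gives `Λ'' · t q (p t)² = t² q d² + (t q - d)² > 0`. At `1 - α` the level
`-log α` is also attained at `λ = 0`, and near `a = 1` the bound `(1 - Λ) (-log (1 - a)) ≤ F + 1`
forces `Λ → 1`, so `Λ` is continuous, hence strictly convex, on `[1 - α, 1]`; being nonnegative
there and zero on `[0, 1 - α]`, it is convex on `[0, 1]`. -/

/-- `F(λ,a) = λ log λ + (1-λ) log(1-λ) - λ log a - (1-λ) log(1-a)`, with `0 log 0 = 0`. -/
noncomputable def F (l a : ℝ) : ℝ :=
  l * Real.log l + (1 - l) * Real.log (1 - l) - l * Real.log a - (1 - l) * Real.log (1 - a)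

open Real Set Filter Topology

theorem HasStrictFDerivAt.hasDerivAt_of_eventually_unique {f : ℝ × ℝ → ℝ} {u : ℝ × ℝ} {A B : ℝ}
    (hf : HasStrictFDerivAt f
      (A • ContinuousLinearMap.fst ℝ ℝ ℝ + B • ContinuousLinearMap.snd ℝ ℝ ℝ) u)
    (hB : B ≠ 0) {g : ℝ → ℝ} (hg : ∀ᶠ v in 𝓝 u, f v = f u → g v.1 = v.2) :
    HasDerivAt g (-A / B) u.1 := by
  set f' := A • ContinuousLinearMap.fst ℝ ℝ ℝ + B • ContinuousLinearMap.snd ℝ ℝ ℝ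
  have hright : (f' ∘L .inr ℝ ℝ ℝ) ∘L (B⁻¹ • .id ℝ ℝ) = .id ℝ ℝ := by
    ext; simp [f', hB]
  have hleft : (B⁻¹ • .id ℝ ℝ) ∘L (f' ∘L .inr ℝ ℝ ℝ) = .id ℝ ℝ := by
    ext; simp [f', hB]
  have hinv : (f' ∘L .inr ℝ ℝ ℝ).IsInvertible := .of_inverse hright hleft
  set ψ := hf.implicitFunctionOfProdDomain hinv
  have hψ : HasDerivAt ψ (-A / B) u.1 := by
    refine (hf.hasStrictFDerivAt_implicitFunctionOfProdDomain hinv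
      ).hasFDerivAt.hasDerivAt.congr_deriv ?_
    rw [ContinuousLinearMap.inverse_eq hright hleft]
    simp [f', div_eq_mul_inv]
  have hgψ : g =ᶠ[𝓝 u.1] ψ := by
    have hlim : Tendsto (fun x => (x, ψ x)) (𝓝 u.1) (𝓝 u) :=
      tendsto_id.prodMk_nhds (hf.tendsto_implicitFunctionOfProdDomain hinv)
    filter_upwards [hlim.eventually hg, hf.eventually_apply_implicitFunctionOfProdDomain hinv]
      with x hx hfx
    exact hx hfx
  exact hψ.congr_of_eventuallyEq hgψ

theorem ConvexOn.Icc_of_eq_zero_left {f : ℝ → ℝ} {a b c : ℝ} (h0 : ∀ x ∈ Icc a c, f x = 0)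
    (hf : ConvexOn ℝ (Icc c b) f) (hnn : ∀ x ∈ Icc c b, 0 ≤ f x) :
    ConvexOn ℝ (Icc a b) f := by
  refine convexOn_of_slope_mono_adjacent (convex_Icc a b) fun {x y z} hx hz hxy hyz => ?_
  obtain ⟨hax, hxb⟩ := hx
  obtain ⟨haz, hzb⟩ := hz
  rcases le_or_gt z c with hzc | hcz
  · rw [h0 x ⟨hax, by linarith⟩, h0 y ⟨by linarith, by linarith⟩, h0 z ⟨haz, hzc⟩, sub_zero,
      zero_div, zero_div]
  rcases le_or_gt y c with hyc | hcy
  · rw [h0 x ⟨hax, by linarith⟩, h0 y ⟨by linarith, hyc⟩, sub_zero, zero_div, sub_zero]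
    exact div_nonneg (hnn z ⟨hcz.le, hzb⟩) (by linarith)
  rcases le_or_gt x c with hxc | hcx
  · have hslope := hf.slope_mono_adjacent (left_mem_Icc.2 (by linarith)) ⟨hcz.le, hzb⟩ hcy hyz
    rw [h0 c ⟨by linarith, le_rfl⟩, sub_zero] at hslope
    rw [h0 x ⟨hax, hxc⟩, sub_zero]
    exact (div_le_div_of_nonneg_left (hnn y ⟨hcy.le, by linarith⟩) (by linarith)
      (by linarith)).trans hslope
  · exact hf.slope_mono_adjacent ⟨hcx.le, hxb⟩ ⟨hcz.le, hzb⟩ hxy hyz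

noncomputable def logit (x : ℝ) : ℝ := log x - log (1 - x)

theorem logit_lt_logit {x y : ℝ} (hx : 0 < x) (hxy : x < y) (hy : y < 1) :
    logit x < logit y := by
  have := log_lt_log hx hxy
  have := log_lt_log (by linarith : 0 < 1 - y) (by linarith : 1 - y < 1 - x)
  simp only [logit]
  linarith

theorem hasDerivAt_logit {x : ℝ} (hx0 : 0 < x) (hx1 : x < 1) :
    HasDerivAt logit (1 / (x * (1 - x))) x := by
  have h1x : 1 - x ≠ 0 := sub_ne_zero.2 hx1.ne'
  refine ((hasDerivAt_log hx0.ne').sub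
    (((hasDerivAt_id' x).const_sub 1).log h1x)).congr_deriv ?_
  field_simp
  ring

theorem F_zero_left (a : ℝ) : F 0 a = -log (1 - a) := by simp [F]

theorem continuous_F_left (a : ℝ) : Continuous (F · a) := by
  have := continuous_mul_log.comp (continuous_sub_left (1 : ℝ))
  simp only [F]
  fun_prop

theorem hasStrictFDerivAt_F {l a : ℝ} (hl0 : 0 < l) (hl1 : l < 1) (ha0 : 0 < a) (ha1 : a < 1) :
    HasStrictFDerivAt (fun v : ℝ × ℝ => F v.2 v.1)
      (((a - l) / (a * (1 - a))) • ContinuousLinearMap.fst ℝ ℝ ℝ +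
        (logit l - logit a) • ContinuousLinearMap.snd ℝ ℝ ℝ) (a, l) := by
  have hfst := hasStrictFDerivAt_fst (𝕜 := ℝ) (E := ℝ) (F := ℝ) (p := (a, l))
  have hsnd := hasStrictFDerivAt_snd (𝕜 := ℝ) (E := ℝ) (F := ℝ) (p := (a, l))
  have h1 := (hsnd.mul (hsnd.log hl0.ne')).add
    (((hasStrictFDerivAt_const 1 _).sub hsnd).mul
      (((hasStrictFDerivAt_const 1 _).sub hsnd).log (sub_ne_zero.2 hl1.ne')))
  have h2 := (hsnd.mul (hfst.log ha0.ne')).add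
    (((hasStrictFDerivAt_const 1 _).sub hsnd).mul
      (((hasStrictFDerivAt_const 1 _).sub hfst).log (sub_ne_zero.2 ha1.ne')))
  refine ((h1.sub h2).congr_of_eventuallyEq (Eventually.of_forall fun v => ?_)).congr_fderiv ?_
  · simp only [Pi.sub_apply, Pi.add_apply, Pi.mul_apply, F]
    ring
  · have : 1 - a ≠ 0 := sub_ne_zero.2 ha1.ne'
    have : 1 - l ≠ 0 := sub_ne_zero.2 hl1.ne'
    ext <;>
    simp only [logit, Pi.sub_apply, zero_sub, zero_add, add_zero, smul_zero, smul_neg, neg_zero,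
      neg_add_rev, neg_neg, ContinuousLinearMap.sub_comp, ContinuousLinearMap.add_comp,
      ContinuousLinearMap.smul_comp, ContinuousLinearMap.neg_comp, ContinuousLinearMap.fst_comp_inl,
      ContinuousLinearMap.snd_comp_inl, ContinuousLinearMap.fst_comp_inr,
      ContinuousLinearMap.snd_comp_inr, ContinuousLinearMap.id_apply, sub_apply, add_apply,
      smul_apply, neg_apply, smul_eq_mul, mul_one] <;>
    field_simp <;> ring

theorem strictAntiOn_F_left {a : ℝ} (ha0 : 0 < a) (ha1 : a < 1) :
    StrictAntiOn (F · a) (Icc 0 a) := by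
  refine strictAntiOn_of_deriv_neg (convex_Icc 0 a) (continuous_F_left a).continuousOn
    fun l hl => ?_
  rw [interior_Icc] at hl
  have hF : HasDerivAt (F · a) (logit l - logit a) l := by
    simpa [Function.comp_def] using (hasStrictFDerivAt_F hl.1 (hl.2.trans ha1) ha0 ha1
      ).hasFDerivAt.comp_hasDerivAt l ((hasDerivAt_const l a).prodMk (hasDerivAt_id l))
  rw [hF.deriv, sub_neg]
  exact logit_lt_logit hl.1 hl.2 ha1

theorem one_sub_mul_neg_log_le_F_add_one {l a : ℝ} (hl0 : 0 ≤ l) (hl1 : l ≤ 1) (ha0 : 0 < a)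
    (ha1 : a ≤ 1) : (1 - l) * -log (1 - a) ≤ F l a + 1 := by
  have h1 := self_sub_one_le_mul_log hl0
  have h2 := self_sub_one_le_mul_log (sub_nonneg.2 hl1)
  have h3 := mul_nonpos_of_nonneg_of_nonpos hl0 (log_nonpos ha0.le ha1)
  simp only [F]
  linarith

def IsImplicitLambda (α : ℝ) (Λ : ℝ → ℝ) : Prop :=
  ∀ a ∈ Ioo (1 - α) 1, Λ a ∈ Ico 0 a ∧ F (Λ a) a = -log α

namespace IsImplicitLambda

variable {α : ℝ} {Λ : ℝ → ℝ} {a : ℝ}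

theorem pos (hΛ : IsImplicitLambda α Λ) (ha : a ∈ Ioo (1 - α) 1) : 0 < Λ a := by
  obtain ⟨⟨hΛ0, -⟩, hF⟩ := hΛ a ha
  refine hΛ0.lt_of_ne' fun h => ?_
  rw [h, F_zero_left, neg_inj] at hF
  have := log_lt_log (sub_pos.2 ha.2) (by linarith [ha.1] : 1 - a < α)
  linarith

theorem eq_of_F_eq (hΛ : IsImplicitLambda α Λ) (ha : a ∈ Ioo (1 - α) 1) {l : ℝ}
    (hl : l ∈ Icc 0 a) (hF : F l a = -log α) : Λ a = l := by
  obtain ⟨⟨hΛ0, hΛa⟩, hFΛ⟩ := hΛ a ha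
  exact (strictAntiOn_F_left (hΛ0.trans_lt hΛa) ha.2).injOn ⟨hΛ0, hΛa.le⟩ hl
    (hFΛ.trans hF.symm)

theorem hasDerivAt (hΛ : IsImplicitLambda α Λ) (ha : a ∈ Ioo (1 - α) 1) :
    HasDerivAt Λ ((a - Λ a) / (a * (1 - a) * (logit a - logit (Λ a)))) a := by
  have hΛ0 := hΛ.pos ha
  obtain ⟨⟨-, hΛa⟩, hF⟩ := hΛ a ha
  have ha0 := hΛ0.trans hΛa
  have hlogit := logit_lt_logit hΛ0 hΛa ha.2
  have huniq : ∀ᶠ v in 𝓝 (a, Λ a), F v.2 v.1 = F (a, Λ a).2 (a, Λ a).1 → Λ v.1 = v.2 := by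
    have hopen : IsOpen {v : ℝ × ℝ | v.1 ∈ Ioo (1 - α) 1 ∧ 0 < v.2 ∧ v.2 < v.1} :=
      (isOpen_Ioo.preimage continuous_fst).inter
        ((isOpen_lt continuous_const continuous_snd).inter
          (isOpen_lt continuous_snd continuous_fst))
    filter_upwards [hopen.mem_nhds ⟨ha, hΛ0, hΛa⟩] with v ⟨hv, hv0, hv1⟩ hFv
    exact hΛ.eq_of_F_eq hv ⟨hv0.le, hv1.le⟩ (hFv.trans hF)
  refine ((hasStrictFDerivAt_F hΛ0 (hΛa.trans ha.2) ha0 ha.2).hasDerivAt_of_eventually_unique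
    (sub_ne_zero.2 hlogit.ne) huniq).congr_deriv ?_
  rw [neg_div, ← div_neg, neg_sub, div_div]

theorem exists_pos_hasDerivAt_deriv (hΛ : IsImplicitLambda α Λ) (ha : a ∈ Ioo (1 - α) 1) :
    ∃ c, 0 < c ∧ HasDerivAt (deriv Λ) c a := by
  have hΛ0 := hΛ.pos ha
  obtain ⟨⟨-, hΛa⟩, -⟩ := hΛ a ha
  have ha0 := hΛ0.trans hΛa
  have hΛ1 := hΛa.trans ha.2
  have hderiv : deriv Λ =ᶠ[𝓝 a]
      fun x => (x - Λ x) / (x * (1 - x) * (logit x - logit (Λ x))) := by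
    filter_upwards [isOpen_Ioo.mem_nhds ha] with x hx using (hΛ.hasDerivAt hx).deriv
  set l := Λ a
  set t := logit a - logit l
  set s := (a - l) / (a * (1 - a) * t)
  have hs : HasDerivAt Λ s a := hΛ.hasDerivAt ha
  have ht : 0 < t := sub_pos.2 (logit_lt_logit hΛ0 hΛa ha.2)
  have hp : HasDerivAt (fun x => x * (1 - x)) (1 - 2 * a) a :=
    ((hasDerivAt_id' a).mul ((hasDerivAt_id' a).const_sub 1)).congr_deriv (by ring)
  have hlogit : HasDerivAt (fun x => logit x - logit (Λ x))
      (1 / (a * (1 - a)) - s / (l * (1 - l))) a :=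
    ((hasDerivAt_logit ha0 ha.2).sub ((hasDerivAt_logit hΛ0 hΛ1).comp a hs)).congr_deriv (by ring)
  have hp0 : 0 < a * (1 - a) := mul_pos ha0 (sub_pos.2 ha.2)
  have hq0 : 0 < l * (1 - l) := mul_pos hΛ0 (sub_pos.2 hΛ1)
  have hΛ' := ((hasDerivAt_id' a).sub hs).div (hp.mul hlogit) (mul_pos hp0 ht).ne'
  refine ⟨_, div_pos ?_ (pow_pos (mul_pos hp0 ht) 2), hΛ'.congr_of_eventuallyEq hderiv⟩
  have key : ((1 - s) * (a * (1 - a) * t) - (a - l) * ((1 - 2 * a) * t +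
      a * (1 - a) * (1 / (a * (1 - a)) - s / (l * (1 - l))))) * (t * (l * (1 - l))) =
      t ^ 2 * (l * (1 - l)) * (a - l) ^ 2 + (t * (l * (1 - l)) - (a - l)) ^ 2 := by
    have : 1 - a ≠ 0 := sub_ne_zero.2 ha.2.ne'
    have : 1 - l ≠ 0 := sub_ne_zero.2 hΛ1.ne'
    simp only [s]
    field_simp
    ring
  have hd : 0 < a - l := sub_pos.2 hΛa
  have hN := key ▸ add_pos_of_pos_of_nonneg (by positivity) (sq_nonneg _)
  exact (mul_pos_iff_of_pos_right (mul_pos ht hq0)).1 hN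

theorem continuousWithinAt_left (hΛ : IsImplicitLambda α Λ) (hα : α ∈ Ioo 0 1)
    (hΛα : Λ (1 - α) = 0) : ContinuousWithinAt Λ (Icc (1 - α) 1) (1 - α) := by
  have hc0 : 0 < 1 - α := by linarith [hα.2]
  have hc1 : 1 - α < 1 := by linarith [hα.1]
  have hnear : ∀ᶠ a in 𝓝[Icc (1 - α) 1] (1 - α), a = 1 - α ∨ a ∈ Ioo (1 - α) 1 := by
    filter_upwards [self_mem_nhdsWithin, nhdsWithin_le_nhds (Iio_mem_nhds hc1)] with a ha ha1
    exact ha.1.eq_or_lt.imp Eq.symm fun h => ⟨h, ha1⟩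
  rw [ContinuousWithinAt, hΛα]
  refine tendsto_order.2 ⟨fun b hb => ?_, fun b hb => ?_⟩
  · filter_upwards [hnear] with a ha
    rcases ha with rfl | ha
    · rwa [hΛα]
    · exact hb.trans_le (hΛ a ha).1.1
  set ε := min b (1 - α)
  have hε0 : 0 < ε := lt_min hb hc0
  have hε : ε ≤ 1 - α := min_le_right _ _
  have hFε : F ε (1 - α) < -log α := by
    have : F ε (1 - α) < F 0 (1 - α) :=
      strictAntiOn_F_left hc0 hc1 ⟨le_rfl, hc0.le⟩ ⟨hε0.le, hε⟩ hε0
    rwa [F_zero_left, sub_sub_cancel] at this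
  have hcont : ContinuousAt (F ε ·) (1 - α) :=
    ContinuousAt.comp (g := fun v : ℝ × ℝ => F v.2 v.1) (f := fun x => (x, ε))
      (hasStrictFDerivAt_F hε0 (hε.trans_lt hc1) hc0 hc1).continuousAt (by fun_prop)
  filter_upwards [hnear, nhdsWithin_le_nhds (hcont.eventually (gt_mem_nhds hFε))]
    with a ha hFa
  rcases ha with rfl | ha
  · rwa [hΛα]
  by_contra! hbΛ
  obtain ⟨⟨hΛ0, hΛa⟩, hF⟩ := hΛ a ha
  have := (strictAntiOn_F_left (hΛ0.trans_lt hΛa) ha.2).antitoneOn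
    ⟨hε0.le, hε.trans ha.1.le⟩ ⟨hΛ0, hΛa.le⟩ ((min_le_left _ _).trans hbΛ)
  linarith

theorem continuousWithinAt_right (hΛ : IsImplicitLambda α Λ) (hα : 0 < α) (hΛ1 : Λ 1 = 1) :
    ContinuousWithinAt Λ (Icc (1 - α) 1) 1 := by
  refine (continuousWithinAt_Iio_iff_Iic.1 ?_).mono fun x hx => hx.2
  have hnear : ∀ᶠ a in 𝓝[<] 1, a ∈ Ioo (1 - α) 1 := Ioo_mem_nhdsLT (by linarith)
  have hlog : Tendsto (fun a => -log (1 - a)) (𝓝[<] 1) atTop := by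
    have h1 : Tendsto (fun a : ℝ => 1 - a) (𝓝[<] 1) (𝓝[>] 0) := by
      refine tendsto_nhdsWithin_iff.2
        ⟨?_, eventually_nhdsWithin_of_forall fun a ha => sub_pos.2 (mem_Iio.1 ha)⟩
      exact (by simpa using (continuous_sub_left (1 : ℝ)).tendsto 1 :
        Tendsto (fun a : ℝ => 1 - a) (𝓝 1) (𝓝 0)).mono_left nhdsWithin_le_nhds
    exact tendsto_neg_atBot_atTop.comp (tendsto_log_nhdsGT_zero.comp h1)
  have hlow : Tendsto (fun a => 1 - (-log α + 1) / -log (1 - a)) (𝓝[<] 1) (𝓝 1) := by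
    simpa using (tendsto_const_nhds.div_atTop hlog).const_sub 1
  rw [ContinuousWithinAt, hΛ1]
  refine tendsto_of_tendsto_of_tendsto_of_le_of_le' hlow tendsto_const_nhds ?_ ?_
  · filter_upwards [hnear] with a ha
    obtain ⟨⟨hΛ0, hΛa⟩, hF⟩ := hΛ a ha
    have ha0 := hΛ0.trans_lt hΛa
    have hlog_pos : 0 < -log (1 - a) := neg_pos.2 (log_neg (sub_pos.2 ha.2) (by linarith))
    have := one_sub_mul_neg_log_le_F_add_one hΛ0 (hΛa.trans ha.2).le ha0 ha.2.le
    rw [hF] at this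
    rw [sub_le_comm, le_div_iff₀ hlog_pos]
    linarith
  · filter_upwards [hnear] with a ha using ((hΛ a ha).1.2.trans ha.2).le

theorem mem_Icc (hΛ : IsImplicitLambda α Λ) (hΛ0 : ∀ a ∈ Icc 0 (1 - α), Λ a = 0)
    (hΛ1 : Λ 1 = 1) (ha : a ∈ Icc 0 1) : Λ a ∈ Icc 0 a := by
  rcases le_or_gt a (1 - α) with h | h
  · rw [hΛ0 a ⟨ha.1, h⟩]
    exact ⟨le_rfl, ha.1⟩
  rcases ha.2.eq_or_lt with rfl | h1
  · rw [hΛ1]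
    exact ⟨zero_le_one, le_rfl⟩
  · exact Ico_subset_Icc_self (hΛ a ⟨h, h1⟩).1

end IsImplicitLambda

/-- The implicit function `Λ` is twice differentiable with `Λ'' > 0` on `(1-α,1)`;
consequently its extension to `[0,1]` (with `Λ = 0` on `[0,1-α]` and `Λ(1) = 1`) is a
convex function from `[0,1]` to `[0,1]` with `Λ(0) = 0`, `Λ(1) = 1`, which is strictly
convex on `[1-α,1]`. -/
theorem lambda_convex (α : ℝ) (hα : α ∈ Set.Ioo (0 : ℝ) 1)
    (Λ : ℝ → ℝ)
    (hΛ0 : ∀ a ∈ Set.Icc (0 : ℝ) (1 - α), Λ a = 0)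
    (hΛ1 : ∀ a ∈ Set.Ioo (1 - α) 1, Λ a ∈ Set.Ico 0 a ∧ F (Λ a) a = -Real.log α)
    (hΛ2 : Λ 1 = 1) :
    (∀ a ∈ Set.Ioo (1 - α) 1,
      DifferentiableAt ℝ Λ a ∧ DifferentiableAt ℝ (deriv Λ) a ∧ 0 < deriv (deriv Λ) a) ∧
    ConvexOn ℝ (Set.Icc (0 : ℝ) 1) Λ ∧
    (∀ a ∈ Set.Icc (0 : ℝ) 1, Λ a ∈ Set.Icc (0 : ℝ) 1) ∧
    Λ 0 = 0 ∧ Λ 1 = 1 ∧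
    StrictConvexOn ℝ (Set.Icc (1 - α) 1) Λ := by
  have hΛ : IsImplicitLambda α Λ := hΛ1
  have hc0 : 0 ≤ 1 - α := by linarith [hα.2]
  have hcont : ContinuousOn Λ (Icc (1 - α) 1) := by
    intro a ha
    rcases ha.1.eq_or_lt with rfl | h1
    · exact hΛ.continuousWithinAt_left hα (hΛ0 _ ⟨hc0, le_rfl⟩)
    rcases ha.2.eq_or_lt with rfl | h2
    · exact hΛ.continuousWithinAt_right hα.1 hΛ2
    · exact (hΛ.hasDerivAt ⟨h1, h2⟩).continuousAt.continuousWithinAt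
  have hstrict : StrictConvexOn ℝ (Icc (1 - α) 1) Λ := by
    refine strictConvexOn_of_deriv2_pos (convex_Icc _ _) hcont fun a ha => ?_
    rw [interior_Icc] at ha
    obtain ⟨c, hc, hd⟩ := hΛ.exists_pos_hasDerivAt_deriv ha
    simpa [hd.deriv] using hc
  have hmem := fun a ha => hΛ.mem_Icc hΛ0 hΛ2 (a := a) ha
  refine ⟨fun a ha => ?_, hstrict.convexOn.Icc_of_eq_zero_left hΛ0
      (fun a ha => (hmem a ⟨hc0.trans ha.1, ha.2⟩).1),
    fun a ha => ⟨(hmem a ha).1, (hmem a ha).2.trans ha.2⟩, hΛ0 0 ⟨le_rfl, hc0⟩, hΛ2, hstrict⟩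
  obtain ⟨c, hc, hd⟩ := hΛ.exists_pos_hasDerivAt_deriv ha
  exact ⟨(hΛ.hasDerivAt ha).differentiableAt, hd.differentiableAt, hd.deriv ▸ hc⟩
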